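/- arXiv:2109.06584 — 2 statements merged into one kernel-verified Lean document; each statement's English description precedes it below -/
import Mathlib

section
/- Winner-bit probability in the sig-cGA selection step: Let n be an even positive integer, m ∈ [0..n/2−1] an integer, and τ = (τ_1,…,τ_n) ∈ [0,1]^n a frequency vector. Let x and y be two independent random bit strings whose bits are independent with Pr[x_i = 1] = Pr[y_i = 1] = τ_i for all i. Let z be the winner of x and y with respect to DLB, i.e., z = x if DLB(x) > DLB(y), z = y if DLB(y) > DLB(x), and z is chosen uniformly at random from {x, y} if DLB(x) = DLB(y). Then, conditioning on the event {min{DLB(x), DLB(y)} ≥ 2m} (assumed to have positive probability), the probability that z_{2m+1} = 1 equals p(τ_{2m+1}, τ_{2m+2}) := τ_{2m+1}·(−τ_{2m+2}² + 3τ_{2m+2} + (τ_{2m+2}² − 3τ_{2m+2} + 1)·τ_{2m+1}). -/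
/-- Number of leading ones among positions `0, …, n-1` of `x : ℕ → Bool`. -/
def LOn (n : ℕ) (x : ℕ → Bool) : ℕ :=
  ((Finset.range n).filter (fun r => ∀ s ≤ r, x s = true)).card

/-- The DeceivingLeadingBlocks function (0-based encoding of bit positions):
blocks are `(x (2ℓ), x (2ℓ+1))`; if `x` is not the all-ones string and `m` is the
index of the first non-`11` block, then the value is `2m+1` for a `00` critical
block, `2m` for a `01`/`10` critical block, and `n` for the all-ones string. -/
def DLBn (n : ℕ) (x : ℕ → Bool) : ℕ :=
  if ∀ i < n, x i = true then n
  else if x (2 * (LOn n x / 2)) = false ∧ x (2 * (LOn n x / 2) + 1) = false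
    then 2 * (LOn n x / 2) + 1
    else 2 * (LOn n x / 2)

/-- The Honest Leading Blocks function with parameter `δ`:
`HLB_δ(x) = 2m` if `DLB(x) = 2m+1`, `HLB_δ(x) = 2m+2-δ` if `DLB(x) = 2m` (for
`m ∈ [0..n/2-1]`), and `HLB_δ(x) = n` if `DLB(x) = n`. -/
noncomputable def HLBn (n : ℕ) (δ : ℝ) (x : ℕ → Bool) : ℝ :=
  if ∀ i < n, x i = true then (n : ℝ)
  else if x (2 * (LOn n x / 2)) = false ∧ x (2 * (LOn n x / 2) + 1) = false
    then (2 * (LOn n x / 2) : ℕ)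
    else (2 * (LOn n x / 2) : ℕ) + 2 - δ

/-- Extend a bit string `x : Fin n → Bool` to all of `ℕ` (by `false` outside). -/
def toNatFun {n : ℕ} (x : Fin n → Bool) : ℕ → Bool :=
  fun i => if h : i < n then x ⟨i, h⟩ else false

/-- The LeadingOnes value of a bit string of length `n`. -/
def LO {n : ℕ} (x : Fin n → Bool) : ℕ := LOn n (toNatFun x)

/-- The DeceivingLeadingBlocks value of a bit string of length `n`. -/
def DLB {n : ℕ} (x : Fin n → Bool) : ℕ := DLBn n (toNatFun x)

/-- The Honest Leading Blocks value (parameter `δ`) of a bit string of length `n`. -/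
noncomputable def HLB {n : ℕ} (δ : ℝ) (x : Fin n → Bool) : ℝ := HLBn n δ (toNatFun x)

/-! Conditioned on the event, both strings begin with `2m` ones, and DLB then compares them
through their critical blocks (bits `2m`, `2m+1`) alone: a mixed block scores `2m`, a `00` block
`2m+1`, and a `11` block more than both. Under the product distribution the prefix and the
critical block are independent, so the squared probability of the prefix cancels from numerator
and denominator, leaving a sum over the sixteen pairs of critical blocks. -/

section LeadingBlocks

variable {n k : ℕ} {x : ℕ → Bool}

theorem le_LOn (hk : k ≤ n) (h : ∀ i < k, x i = true) : k ≤ LOn n x := by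
  have hsub : Finset.range k ⊆ (Finset.range n).filter (fun r => ∀ s ≤ r, x s = true) :=
    fun r hr => by
      simp only [Finset.mem_range] at hr
      simpa using ⟨by omega, fun s hs => h s (by omega)⟩
  simpa [LOn] using Finset.card_le_card hsub

theorem LOn_le_of_eq_false (h : x k = false) : LOn n x ≤ k := by
  have hsub : (Finset.range n).filter (fun r => ∀ s ≤ r, x s = true) ⊆ Finset.range k :=
    fun r hr => by
      simp only [Finset.mem_filter, Finset.mem_range] at hr ⊢
      by_contra hkr
      simpa [h] using hr.2 k (by omega)
  simpa [LOn] using Finset.card_le_card hsub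

theorem LOn_le : LOn n x ≤ n :=
  (Finset.card_filter_le _ _).trans (Finset.card_range n).le

theorem two_mul_LOn_div_two_le_DLBn : 2 * (LOn n x / 2) ≤ DLBn n x := by
  have := LOn_le (n := n) (x := x)
  unfold DLBn
  split_ifs <;> omega

theorem DLBn_le_of_not_forall (h : ¬ ∀ i < n, x i = true) : DLBn n x ≤ 2 * (LOn n x / 2) + 1 := by
  unfold DLBn
  split_ifs <;> omega

theorem two_mul_le_DLBn_iff {m : ℕ} (hm : 2 * m ≤ n) :
    2 * m ≤ DLBn n x ↔ ∀ i < 2 * m, x i = true := by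
  refine ⟨fun hle => ?_, fun h => ?_⟩
  · by_contra! ⟨i, hi, hxi⟩
    have hLO := LOn_le_of_eq_false (n := n) (by simpa using hxi)
    have := DLBn_le_of_not_forall (n := n) (x := x) fun h => by simp [h i (by omega)] at hxi
    omega
  · have := le_LOn hm h
    have := two_mul_LOn_div_two_le_DLBn (n := n) (x := x)
    omega

def blockRank : Bool × Bool → ℕ
  | (true, true) => 2
  | (false, false) => 1
  | _ => 0

theorem min_DLBn_eq {m : ℕ} (hm : 2 * m + 2 ≤ n) (h : ∀ i < 2 * m, x i = true) :
    min (DLBn n x) (2 * m + 2) = 2 * m + blockRank (x (2 * m), x (2 * m + 1)) := by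
  have h2m := le_LOn (n := n) (by omega) h
  by_cases h11 : x (2 * m) = true ∧ x (2 * m + 1) = true
  · have := le_LOn (x := x) hm fun i hi => by
      rcases (by omega : i < 2 * m ∨ i = 2 * m ∨ i = 2 * m + 1) with hi | rfl | rfl
      exacts [h i hi, h11.1, h11.2]
    have := two_mul_LOn_div_two_le_DLBn (n := n) (x := x)
    simp only [h11, blockRank]
    omega
  · obtain ⟨j, hj, hxj⟩ : ∃ j ≤ 2 * m + 1, x j = false := by
      by_cases h0 : x (2 * m) = true
      · exact ⟨2 * m + 1, le_rfl, by simpa [h0] using h11⟩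
      · exact ⟨2 * m, by omega, by simpa using h0⟩
    have hLO : 2 * (LOn n x / 2) = 2 * m := by
      have := LOn_le_of_eq_false (n := n) hxj
      omega
    have hnot : ¬ ∀ i < n, x i = true := fun h' => by simp [h' j (by omega)] at hxj
    rw [DLBn, if_neg hnot, hLO]
    rcases h0 : x (2 * m) <;> rcases h1 : x (2 * m + 1) <;> simp_all [blockRank]

end LeadingBlocks

section BitStrings

variable {n m : ℕ}

abbrev StartsWithOnes (k : ℕ) (x : Fin n → Bool) : Prop :=
  ∀ i : Fin n, (i : ℕ) < k → x i = true

def criticalBlock {α : Type*} (hm : 2 * m + 2 ≤ n) (x : Fin n → α) : α × α :=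
  (x ⟨2 * m, (Nat.lt_add_of_pos_right two_pos).trans_le hm⟩,
    x ⟨2 * m + 1, (Nat.lt_succ_self _).trans_le hm⟩)

theorem toNatFun_of_lt (x : Fin n → Bool) {i : ℕ} (hi : i < n) : toNatFun x i = x ⟨i, hi⟩ :=
  dif_pos hi

theorem two_mul_le_DLB_iff (hm : 2 * m ≤ n) (x : Fin n → Bool) :
    2 * m ≤ DLB x ↔ StartsWithOnes (2 * m) x := by
  rw [DLB, two_mul_le_DLBn_iff hm]
  constructor
  · intro h i hi
    simpa [toNatFun_of_lt x i.isLt] using h i hi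
  · intro h i hi
    rw [toNatFun_of_lt x (by omega)]
    exact h _ hi

theorem min_DLB_eq (hm : 2 * m + 2 ≤ n) (x : Fin n → Bool) (h : StartsWithOnes (2 * m) x) :
    min (DLB x) (2 * m + 2) = 2 * m + blockRank (criticalBlock hm x) := by
  rw [DLB, min_DLBn_eq hm ((two_mul_le_DLBn_iff (by omega)).1 ((two_mul_le_DLB_iff (by omega) x).2 h)),
    toNatFun_of_lt x (by omega), toNatFun_of_lt x (by omega)]
  rfl

noncomputable def winnerValue {α : Type*} (f : α → ℕ) (g : α → ℝ) (x y : α) : ℝ :=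
  if f y < f x then g x else if f x < f y then g y else (g x + g y) / 2

theorem winnerValue_DLB_eq (hm : 2 * m + 2 ≤ n) (x y : Fin n → Bool)
    (hx : StartsWithOnes (2 * m) x) (hy : StartsWithOnes (2 * m) y) :
    winnerValue DLB (fun z => if (criticalBlock hm z).1 then 1 else 0) x y =
      winnerValue blockRank (fun p => if p.1 then 1 else 0)
        (criticalBlock hm x) (criticalBlock hm y) := by
  have hDx := min_DLB_eq hm x hx
  have hDy := min_DLB_eq hm y hy
  dsimp only [winnerValue]
  -- Two `11` blocks are compared beyond bit `2m+1`, but then both bits `2m` are ones.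
  generalize criticalBlock hm x = p, criticalBlock hm y = q at hDx hDy ⊢
  rcases p with ⟨_ | _, _ | _⟩ <;> rcases q with ⟨_ | _, _ | _⟩ <;>
    simp only [blockRank] at hDx hDy ⊢ <;> split_ifs <;> first | omega | norm_num

end BitStrings

theorem sum_prod_mul_ite_forall {ι β R : Type*} [Fintype ι] [DecidableEq ι] [Fintype β]
    [CommSemiring R] (f : ι → β → R) (c : ι → β → Prop) [∀ i b, Decidable (c i b)]
    [DecidablePred fun x : ι → β => ∀ i, c i (x i)] :
    ∑ x : ι → β, (∏ i, f i (x i)) * (if ∀ i, c i (x i) then 1 else 0) =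
      ∏ i, ∑ b, if c i b then f i b else 0 := by
  rw [Fintype.prod_sum]
  refine Fintype.sum_congr _ _ fun x => ?_
  rw [Finset.prod_ite_zero]
  simp

section CriticalBlockProbability

variable {n m : ℕ}

def stringProb {ι : Type*} [Fintype ι] (τ : ι → ℝ) (x : ι → Bool) : ℝ :=
  ∏ i, if x i then τ i else 1 - τ i

def blockProb (t : ℝ × ℝ) (p : Bool × Bool) : ℝ :=
  (if p.1 then t.1 else 1 - t.1) * (if p.2 then t.2 else 1 - t.2)

def prefixProb (k : ℕ) (τ : Fin n → ℝ) : ℝ :=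
  ∏ i : Fin n, if (i : ℕ) < k then τ i else 1

theorem sum_stringProb_mul_ite_criticalBlock_eq (hm : 2 * m + 2 ≤ n) (τ : Fin n → ℝ)
    (p : Bool × Bool) :
    ∑ x, stringProb τ x * (if StartsWithOnes (2 * m) x ∧ criticalBlock hm x = p then 1 else 0) =
      prefixProb (2 * m) τ * blockProb (criticalBlock hm τ) p := by
  set i₀ : Fin n := ⟨2 * m, by omega⟩
  set i₁ : Fin n := ⟨2 * m + 1, by omega⟩
  have hcyl (x : Fin n → Bool) : (StartsWithOnes (2 * m) x ∧ criticalBlock hm x = p) ↔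
      ∀ i : Fin n, ((i : ℕ) < 2 * m → x i = true) ∧ (i = i₀ → x i = p.1) ∧ (i = i₁ → x i = p.2) := by
    simp only [criticalBlock, Prod.ext_iff, forall_and, forall_eq]
    rfl
  refine (Fintype.sum_congr _ _ fun x => congrArg _ (if_congr (hcyl x) rfl rfl)).trans
    ((sum_prod_mul_ite_forall (fun (i : Fin n) (b : Bool) => if b then τ i else 1 - τ i)
      (fun (i : Fin n) (b : Bool) =>
        ((i : ℕ) < 2 * m → b = true) ∧ (i = i₀ → b = p.1) ∧ (i = i₁ → b = p.2))).trans ?_)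
  have hcoord (i : Fin n) : (∑ b : Bool, if ((i : ℕ) < 2 * m → b = true) ∧ (i = i₀ → b = p.1) ∧
      (i = i₁ → b = p.2) then (if b then τ i else 1 - τ i) else 0) =
      (if (i : ℕ) < 2 * m then τ i else 1) *
        ((if i = i₀ then (if p.1 then τ i else 1 - τ i) else 1) *
          (if i = i₁ then (if p.2 then τ i else 1 - τ i) else 1)) := by
    by_cases hi : (i : ℕ) < 2 * m
    · have h₀ : i ≠ i₀ := Fin.ne_of_val_ne (by simp [i₀]; omega)
      have h₁ : i ≠ i₁ := Fin.ne_of_val_ne (by simp [i₁]; omega)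
      simp [hi, h₀, h₁]
    · by_cases h₀ : i = i₀
      · have h₁ : i ≠ i₁ := Fin.ne_of_val_ne (by simp [h₀, i₀, i₁])
        subst h₀
        cases p.1 <;> simp [hi, h₁]
      · by_cases h₁ : i = i₁
        · subst h₁
          cases p.2 <;> simp [hi, h₀]
        · simp [hi, h₀, h₁]
  simp only [hcoord, Finset.prod_mul_distrib, Finset.prod_ite_eq', Finset.mem_univ, if_true,
    prefixProb, blockProb]
  rfl

theorem sum_stringProb_mul_ite_startsWithOnes (hm : 2 * m + 2 ≤ n) (τ : Fin n → ℝ)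
    (g : Bool × Bool → ℝ) :
    ∑ x, stringProb τ x * (if StartsWithOnes (2 * m) x then g (criticalBlock hm x) else 0) =
      prefixProb (2 * m) τ * ∑ p, blockProb (criticalBlock hm τ) p * g p := by
  have hsplit (x : Fin n → Bool) :
      (if StartsWithOnes (2 * m) x then g (criticalBlock hm x) else 0) =
        ∑ p, g p * (if StartsWithOnes (2 * m) x ∧ criticalBlock hm x = p then 1 else 0) := by
    by_cases hx : StartsWithOnes (2 * m) x
    · simp [eq_true hx]
    · simp [hx]
  simp_rw [hsplit, Finset.mul_sum]
  rw [Finset.sum_comm]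
  refine Fintype.sum_congr _ _ fun p => ?_
  simp_rw [mul_left_comm _ (g p), ← Finset.mul_sum, sum_stringProb_mul_ite_criticalBlock_eq hm]
  ring

theorem sum_sum_stringProb_mul_ite_startsWithOnes (hm : 2 * m + 2 ≤ n) (τ : Fin n → ℝ)
    (G : Bool × Bool → Bool × Bool → ℝ) :
    ∑ x, ∑ y, stringProb τ x * stringProb τ y *
      (if StartsWithOnes (2 * m) x ∧ StartsWithOnes (2 * m) y then
        G (criticalBlock hm x) (criticalBlock hm y) else 0) =
      prefixProb (2 * m) τ ^ 2 * ∑ p, ∑ q,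
        blockProb (criticalBlock hm τ) p * blockProb (criticalBlock hm τ) q * G p q := by
  have hinner (x : Fin n → Bool) : ∑ y, stringProb τ x * stringProb τ y *
      (if StartsWithOnes (2 * m) x ∧ StartsWithOnes (2 * m) y then
        G (criticalBlock hm x) (criticalBlock hm y) else 0) =
      stringProb τ x * (if StartsWithOnes (2 * m) x then prefixProb (2 * m) τ *
        ∑ q, blockProb (criticalBlock hm τ) q * G (criticalBlock hm x) q else 0) := by
    rw [← sum_stringProb_mul_ite_startsWithOnes hm]
    by_cases hx : StartsWithOnes (2 * m) x
    · simp [eq_true hx, Finset.mul_sum, mul_assoc]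
    · simp [hx]
  rw [Fintype.sum_congr _ _ hinner, sum_stringProb_mul_ite_startsWithOnes hm τ fun p =>
    prefixProb (2 * m) τ * ∑ q, blockProb (criticalBlock hm τ) q * G p q]
  simp only [Finset.mul_sum]
  exact Fintype.sum_congr _ _ fun p => Fintype.sum_congr _ _ fun q => by ring

end CriticalBlockProbability

theorem sum_blockProb (t : ℝ × ℝ) : ∑ p, blockProb t p = 1 := by
  simp [blockProb, Fintype.sum_prod_type]
  ring

theorem sum_sum_blockProb_mul_winnerValue (t : ℝ × ℝ) :
    ∑ p, ∑ q, blockProb t p * blockProb t q *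
      winnerValue blockRank (fun p => if p.1 then 1 else 0) p q =
      t.1 * (-t.2 ^ 2 + 3 * t.2 + (t.2 ^ 2 - 3 * t.2 + 1) * t.1) := by
  simp [blockProb, winnerValue, blockRank, Fintype.sum_prod_type]
  ring

/-- **Winner-bit probability in the sig-cGA selection step.** Let `n` be even
and positive, `m ∈ [0..n/2-1]`, and `τ ∈ [0,1]^n` a frequency vector. Let `x`
and `y` be independent random bit strings with independent bits satisfying
`Pr[x i = 1] = Pr[y i = 1] = τ i` (so a string `x` has probability
`P x = ∏ i, (if x i then τ i else 1 - τ i)`), and let `z` be the winner of `x`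
and `y` with respect to `DLB`, ties broken uniformly at random. Then,
conditioning on the positive-probability event `{min (DLB x) (DLB y) ≥ 2m}`,
the probability that `z_{2m+1} = 1` (1-based indexing; bit `2m` in 0-based
indexing) equals
`p(τ_{2m+1}, τ_{2m+2}) = τ_{2m+1}·(-τ_{2m+2}² + 3τ_{2m+2} + (τ_{2m+2}² - 3τ_{2m+2} + 1)·τ_{2m+1})`. -/
theorem sig_cGA_winner_bit_probability (n m : ℕ)
    (hm : 2 * m + 2 ≤ n) (τ : Fin n → ℝ) :
    let P : (Fin n → Bool) → ℝ := fun x => ∏ i, (if x i then τ i else 1 - τ i)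
    let ind : (Fin n → Bool) → ℝ := fun x => if x ⟨2 * m, by omega⟩ then 1 else 0
    let w : (Fin n → Bool) → (Fin n → Bool) → ℝ := fun x y =>
      if DLB y < DLB x then ind x
      else if DLB x < DLB y then ind y
      else (ind x + ind y) / 2
    let Den : ℝ := ∑ x : Fin n → Bool, ∑ y : Fin n → Bool,
      P x * P y * (if 2 * m ≤ min (DLB x) (DLB y) then 1 else 0)
    let Num : ℝ := ∑ x : Fin n → Bool, ∑ y : Fin n → Bool,
      P x * P y * (if 2 * m ≤ min (DLB x) (DLB y) then w x y else 0)
    0 < Den →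
      Num / Den =
        τ ⟨2 * m, by omega⟩ *
          (-(τ ⟨2 * m + 1, by omega⟩) ^ 2 + 3 * τ ⟨2 * m + 1, by omega⟩ +
            ((τ ⟨2 * m + 1, by omega⟩) ^ 2 - 3 * τ ⟨2 * m + 1, by omega⟩ + 1) *
              τ ⟨2 * m, by omega⟩) := by
  intro P ind w Den Num hDen
  have hcond (x y : Fin n → Bool) : 2 * m ≤ min (DLB x) (DLB y) ↔
      StartsWithOnes (2 * m) x ∧ StartsWithOnes (2 * m) y := by
    rw [le_min_iff, two_mul_le_DLB_iff (by omega), two_mul_le_DLB_iff (by omega)]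
  have hDen_eq : Den = prefixProb (2 * m) τ ^ 2 := by
    have := sum_sum_stringProb_mul_ite_startsWithOnes hm τ fun _ _ => 1
    simp only [mul_one, ← Finset.sum_mul_sum, sum_blockProb] at this
    simpa only [Den, P, hcond, stringProb] using this
  have hNum_eq : Num = prefixProb (2 * m) τ ^ 2 * ((criticalBlock hm τ).1 *
      (-(criticalBlock hm τ).2 ^ 2 + 3 * (criticalBlock hm τ).2 +
        ((criticalBlock hm τ).2 ^ 2 - 3 * (criticalBlock hm τ).2 + 1) * (criticalBlock hm τ).1)) := by
    rw [← sum_sum_blockProb_mul_winnerValue, ← sum_sum_stringProb_mul_ite_startsWithOnes hm]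
    refine Fintype.sum_congr _ _ fun x => Fintype.sum_congr _ _ fun y => congrArg _ ?_
    by_cases h : StartsWithOnes (2 * m) x ∧ StartsWithOnes (2 * m) y
    · rw [if_pos ((hcond x y).2 h), if_pos h]
      exact winnerValue_DLB_eq hm x y h.1 h.2
    · rw [if_neg (mt (hcond x y).1 h), if_neg h]
  have hS : prefixProb (2 * m) τ ^ 2 ≠ 0 := hDen_eq ▸ hDen.ne'
  rw [hNum_eq, hDen_eq, mul_div_cancel_left₀ _ hS]
  rfl
end

section
/- Let n ≥ 2 be an integer and define p(a,b) := a(−b² + 3b + (b² − 3b + 1)a). Then for all a, b ∈ {1/2, 1 − 1/n}, one has p(a,b) ≥ (1 + 1/(4n))·a ≥ a; moreover, if a = 1/2 and b ∈ {1/2, 1 − 1/n}, then p(a,b) ≥ (9/8)·a = 9/16. -/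
/-!
Write `p(a,b) = a·(a + (1 - a)·b(3 - b))`. On `1/2 ≤ b ≤ 1` the factor `b(3 - b)` is at least
its value `5/4` at `b = 1/2`, so `p(a,b) ≥ a(5 - a)/4` for `0 ≤ a ≤ 1`. For `n ≥ 2` both
`1/2` and `1 - 1/n` lie in `[1/2, 1 - 1/n]`, and `a ≤ 1 - 1/n` is exactly
`(5 - a)/4 ≥ 1 + 1/(4n)`; at `a = 1/2` the bound `a(5 - a)/4` equals `9/16`.
-/

namespace WinnerProbability

def p (a b : ℝ) : ℝ := a * (-b ^ 2 + 3 * b + (b ^ 2 - 3 * b + 1) * a)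

theorem p_eq (a b : ℝ) : p a b = a * (a + (1 - a) * (b * (3 - b))) := by
  unfold p; ring

theorem five_div_four_le_mul_three_sub {b : ℝ} (hb₁ : 1 / 2 ≤ b) (hb₂ : b ≤ 1) :
    5 / 4 ≤ b * (3 - b) := by
  nlinarith

theorem mul_five_sub_div_four_le_p {a b : ℝ} (ha₀ : 0 ≤ a) (ha₁ : a ≤ 1)
    (hb₁ : 1 / 2 ≤ b) (hb₂ : b ≤ 1) : a * (5 - a) / 4 ≤ p a b := by
  have hb := five_div_four_le_mul_three_sub hb₁ hb₂
  calc a * (5 - a) / 4 = a * ((5 - a) / 4) := by ring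
    _ ≤ a * (a + (1 - a) * (b * (3 - b))) := by
        gcongr
        linarith [mul_le_mul_of_nonneg_left hb (sub_nonneg.mpr ha₁)]
    _ = p a b := (p_eq a b).symm

theorem one_add_inv_four_mul_le {a c : ℝ} (ha₀ : 0 ≤ a) (ha : a ≤ 1 - 1 / c) :
    (1 + 1 / (4 * c)) * a ≤ a * (5 - a) / 4 := by
  have hc : 1 / (4 * c) = 1 / c / 4 := by rw [mul_comm, ← div_div]
  rw [hc]
  nlinarith

theorem mem_Icc_of_eq_half_or_eq_one_sub_inv {n : ℕ} (hn : 2 ≤ n) {a : ℝ}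
    (ha : a = 1 / 2 ∨ a = 1 - 1 / n) : a ∈ Set.Icc (1 / 2 : ℝ) (1 - 1 / n) := by
  have hinv : 1 / (n : ℝ) ≤ 1 / 2 := one_div_le_one_div_of_le two_pos (by exact_mod_cast hn)
  rcases ha with rfl | rfl <;> constructor <;> linarith

end WinnerProbability

open WinnerProbability in
/-- Let `n ≥ 2` be an integer and `p(a,b) := a·(-b² + 3b + (b² - 3b + 1)·a)`.
For all `a, b ∈ {1/2, 1 - 1/n}` one has `p(a,b) ≥ (1 + 1/(4n))·a ≥ a`;
moreover, if `a = 1/2` and `b ∈ {1/2, 1 - 1/n}`, then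
`p(a,b) ≥ (9/8)·a = 9/16`. -/
theorem winner_probability_lower_bounds (n : ℕ) (hn : 2 ≤ n) (a b : ℝ)
    (ha : a = 1 / 2 ∨ a = 1 - 1 / n) (hb : b = 1 / 2 ∨ b = 1 - 1 / n) :
    ((1 + 1 / (4 * (n : ℝ))) * a ≤
        a * (-b ^ 2 + 3 * b + (b ^ 2 - 3 * b + 1) * a)) ∧
    (a ≤ (1 + 1 / (4 * (n : ℝ))) * a) ∧
    (a = 1 / 2 →
      (9 / 8) * a ≤ a * (-b ^ 2 + 3 * b + (b ^ 2 - 3 * b + 1) * a) ∧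
      (9 / 8) * a = 9 / 16) := by
  obtain ⟨ha₁, ha₂⟩ := mem_Icc_of_eq_half_or_eq_one_sub_inv hn ha
  obtain ⟨hb₁, hb₂⟩ := mem_Icc_of_eq_half_or_eq_one_sub_inv hn hb
  have hinv : 0 ≤ 1 / (n : ℝ) := by positivity
  have ha₀ : 0 ≤ a := by linarith
  have hp : a * (5 - a) / 4 ≤ p a b :=
    mul_five_sub_div_four_le_p ha₀ (by linarith) hb₁ (by linarith)
  refine ⟨(one_add_inv_four_mul_le ha₀ ha₂).trans hp,
    le_mul_of_one_le_left ha₀ (le_add_of_nonneg_right (by positivity)), fun ha_half => ?_⟩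
  subst ha_half
  exact ⟨le_of_eq_of_le (by norm_num) hp, by norm_num⟩
end
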